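/- The polynomial $f(x_1,x_2,x_3) = v_0 x_1^6 + v_6(x_2^6 + 30 x_1 x_2^4 x_3 + 90 x_1^2 x_2^2 x_3^2 + 20 x_1^3 x_3^3) + v_{12} x_3^6$ is positive for all nonzero $(x_1,x_2,x_3) \in \mathbb{R}^3$ if and only if $v_0, v_6, v_{12} > 0$ and $\sqrt{v_0 v_{12}} > (560 + 70\sqrt{70}) v_6$. -/

import Mathlib

/-!
With `s = x₂²` and `u = x₁x₃` the form is `v₀x₁⁶ + v₆ g(s, u) + v₁₂x₃⁶`, where
`g(s, u) = s³ + 30us² + 90u²s + 20u³`. For `s ≥ 0` the cubic satisfies `g(s, u) ≥ -2c|u|³`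
with `c = 560 + 70√70`, with equality at `u = -w`, `s = (10 + √70)w`, because
`g(s, -w) + 2cw³ = (s - (10 + √70)w)² (s + (2√70 - 10)w)`. By AM-GM,
`v₀x₁⁶ + v₁₂x₃⁶ ≥ 2√(v₀v₁₂)|u|³`, with equality when `v₀x₁⁶ = v₁₂x₃⁶`. Hence the form is at least
`2(√(v₀v₁₂) - cv₆)|u|³`, and both bounds are attained simultaneously.
-/

open Real

def hankelCubic (s u : ℝ) : ℝ := s ^ 3 + 30 * u * s ^ 2 + 90 * u ^ 2 * s + 20 * u ^ 3

def hankelSextic (v0 v6 v12 x1 x2 x3 : ℝ) : ℝ :=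
  v0 * x1 ^ 6 + v6 * hankelCubic (x2 ^ 2) (x1 * x3) + v12 * x3 ^ 6

lemma hankelSextic_eq (v0 v6 v12 x1 x2 x3 : ℝ) :
    hankelSextic v0 v6 v12 x1 x2 x3 = v0 * x1 ^ 6 +
      v6 * (x2 ^ 6 + 30 * x1 * x2 ^ 4 * x3 + 90 * x1 ^ 2 * x2 ^ 2 * x3 ^ 2 +
        20 * x1 ^ 3 * x3 ^ 3) + v12 * x3 ^ 6 := by
  unfold hankelSextic hankelCubic
  ring

lemma hankelCubic_neg_add_eq (s w : ℝ) :
    hankelCubic s (-w) + 2 * (560 + 70 * √70) * w ^ 3 =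
      (s - (10 + √70) * w) ^ 2 * (s + (2 * √70 - 10) * w) := by
  have hq : √70 ^ 2 = 70 := sq_sqrt (by norm_num)
  unfold hankelCubic
  linear_combination (3 * s * w ^ 2 - 2 * (√70 + 15) * w ^ 3) * hq

lemma hankelCubic_min (w : ℝ) :
    hankelCubic ((10 + √70) * w) (-w) = -(2 * (560 + 70 * √70)) * w ^ 3 := by
  linear_combination hankelCubic_neg_add_eq ((10 + √70) * w) w

lemma neg_mul_abs_pow_le_hankelCubic {s : ℝ} (hs : 0 ≤ s) (u : ℝ) :
    -(2 * (560 + 70 * √70)) * |u| ^ 3 ≤ hankelCubic s u := by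
  have hq : 8 ≤ √70 := le_sqrt_of_sq_le (by norm_num)
  rcases le_total 0 u with hu | hu
  · have : 0 ≤ hankelCubic s u := by unfold hankelCubic; positivity
    nlinarith [pow_nonneg (abs_nonneg u) 3]
  · have hfac : 0 ≤ (s - (10 + √70) * -u) ^ 2 * (s + (2 * √70 - 10) * -u) :=
      mul_nonneg (sq_nonneg _) (by nlinarith)
    have key := hankelCubic_neg_add_eq s (-u)
    rw [neg_neg] at key
    rw [abs_of_nonpos hu]
    linear_combination hfac - key

lemma two_mul_sqrt_mul_mul_abs_mul_le {a b : ℝ} (ha : 0 ≤ a) (hb : 0 ≤ b) (x y : ℝ) :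
    2 * √(a * b) * |x * y| ≤ a * x ^ 2 + b * y ^ 2 := by
  rw [sqrt_mul ha, abs_mul]
  nlinarith [sq_nonneg (√a * |x| - √b * |y|), sq_sqrt ha, sq_sqrt hb, sq_abs x, sq_abs y]

lemma hankelSextic_pos {v0 v6 v12 : ℝ} (h0 : 0 < v0) (h6 : 0 < v6) (h12 : 0 < v12)
    (hS : (560 + 70 * √70) * v6 < √(v0 * v12)) {x1 x2 x3 : ℝ} (hx : (x1, x2, x3) ≠ (0, 0, 0)) :
    0 < hankelSextic v0 v6 v12 x1 x2 x3 := by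
  rcases eq_or_ne (x1 * x3) 0 with hu | hu
  · have hpos : 0 < v0 * x1 ^ 6 + v6 * x2 ^ 6 + v12 * x3 ^ 6 := by
      by_cases h1 : x1 = 0
      · by_cases h2 : x2 = 0
        · have h3 : x3 ≠ 0 := fun h3 => hx (by simp [h1, h2, h3])
          positivity
        · positivity
      · positivity
    unfold hankelSextic hankelCubic
    rw [hu]
    linear_combination hpos
  · have hcubic := neg_mul_abs_pow_le_hankelCubic (sq_nonneg x2) (x1 * x3)
    have hamgm := two_mul_sqrt_mul_mul_abs_mul_le h0.le h12.le (x1 ^ 3) (x3 ^ 3)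
    rw [← mul_pow, abs_pow] at hamgm
    have hgap : 0 < 2 * |x1 * x3| ^ 3 * (√(v0 * v12) - (560 + 70 * √70) * v6) := by
      have := sub_pos.mpr hS
      positivity
    unfold hankelSextic
    nlinarith [mul_le_mul_of_nonneg_left hcubic h6.le]

lemma coeffs_of_hankelSextic_pos {v0 v6 v12 : ℝ}
    (H : ∀ x1 x2 x3 : ℝ, (x1, x2, x3) ≠ (0, 0, 0) → 0 < hankelSextic v0 v6 v12 x1 x2 x3) :
    0 < v0 ∧ 0 < v6 ∧ 0 < v12 ∧ (560 + 70 * √70) * v6 < √(v0 * v12) := by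
  have h0 : 0 < v0 := by simpa [hankelSextic, hankelCubic] using H 1 0 0 (by simp)
  have h6 : 0 < v6 := by simpa [hankelSextic, hankelCubic] using H 0 1 0 (by simp)
  have h12 : 0 < v12 := by simpa [hankelSextic, hankelCubic] using H 0 0 1 (by simp)
  refine ⟨h0, h6, h12, ?_⟩
  -- Equality in both bounds: `v₀x₁⁶ = v₁₂x₃⁶ = v₀v₁₂` and `x₂² = (10 + √70)(-x₁x₃)`.
  set a := v12 ^ (6⁻¹ : ℝ)
  set b := v0 ^ (6⁻¹ : ℝ)
  have ha : a ^ 6 = v12 := by exact_mod_cast rpow_inv_natCast_pow h12.le (n := 6) (by norm_num)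
  have hb : b ^ 6 = v0 := by exact_mod_cast rpow_inv_natCast_pow h0.le (n := 6) (by norm_num)
  have hab : 0 < a * b := by positivity
  have hS : √(v0 * v12) = (a * b) ^ 3 := by
    rw [← sqrt_sq (by positivity : 0 ≤ (a * b) ^ 3)]
    congr 1
    linear_combination (-b ^ 6) * ha - v12 * hb
  have hx2 : √((10 + √70) * (a * b)) ^ 2 = (10 + √70) * (a * b) := sq_sqrt (by positivity)
  have hval := H a (√((10 + √70) * (a * b))) (-b) (by simp [(show 0 < a by positivity).ne'])
  rw [hankelSextic, hx2, show a * -b = -(a * b) by ring, hankelCubic_min, ← hS] at hval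
  have hSpos : 0 < √(v0 * v12) := by rw [hS]; positivity
  nlinarith [sq_sqrt (mul_pos h0 h12).le]

theorem stmt_4 (v0 v6 v12 : ℝ) :
    (∀ x1 x2 x3 : ℝ, (x1, x2, x3) ≠ (0, 0, 0) →
      0 < v0 * x1 ^ 6 +
          v6 * (x2 ^ 6 + 30 * x1 * x2 ^ 4 * x3 + 90 * x1 ^ 2 * x2 ^ 2 * x3 ^ 2 +
            20 * x1 ^ 3 * x3 ^ 3) + v12 * x3 ^ 6) ↔
    (0 < v0 ∧ 0 < v6 ∧ 0 < v12 ∧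
      Real.sqrt (v0 * v12) > (560 + 70 * Real.sqrt 70) * v6) := by
  simp only [← hankelSextic_eq, gt_iff_lt]
  constructor
  · exact coeffs_of_hankelSextic_pos
  · rintro ⟨h0, h6, h12, hS⟩ x1 x2 x3 hx
    exact hankelSextic_pos h0 h6 h12 hS hx
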